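/- Fix i ∈ I and j ∈ I and let Q^i, Q^j be probabilities satisfying the valuation identity for assets i and j respectively. Then for every stopping time T, the European put-call parity relation EX^{ij}(T) + S^i_0 Q^i[T < ζ] = EX^{ji}(T) + S^j_0 Q^j[T < ζ] holds. -/

import Mathlib

/-!
Both sides equal `E_P[max (Y_T S^i_T, Y_T S^j_T) ; T < ζ]`: the valuation identity with `ξ = 1`
turns `S^k_0 Q^k[T < ζ]` into `E_P[Y_T S^k_T ; T < ζ]`, and `(b - a)_+ + a = max a b`.
Splitting the integral of the sum needs `Y_T S^k_T` to be measurable on `{T < ζ}`. There it agrees,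
for `n` large, with the stopped martingale `Y S^k` at `ζ_n ∧ T`, which is measurable because the
paths are a.s. right-continuous: approximate `T` from above by the countably-valued `⌈p T⌉ / p`.
-/

open MeasureTheory Filter Set
open scoped NNReal ENNReal

noncomputable section

namespace ExchangeOptions

variable {Ω : Type*} {m : MeasurableSpace Ω}

/-- An extended (possibly infinite-valued) stopping time for the filtration `F`. -/
def IsExtStoppingTime (F : Filtration ℝ≥0 m) (τ : Ω → ℝ≥0∞) : Prop :=
  ∀ t : ℝ≥0, MeasurableSet[F t] {ω | τ ω ≤ (t : ℝ≥0∞)}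

/-- The σ-algebra `F_τ` at an extended stopping time `τ`. -/
def IsExtStoppingTime.measurableSpace {F : Filtration ℝ≥0 m} {τ : Ω → ℝ≥0∞}
    (hτ : IsExtStoppingTime F τ) : MeasurableSpace Ω where
  MeasurableSet' A := ∀ t : ℝ≥0, MeasurableSet[F t] (A ∩ {ω | τ ω ≤ (t : ℝ≥0∞)})
  measurableSet_empty := fun t => by simp
  measurableSet_compl := fun A hA t => by
    have h : Aᶜ ∩ {ω | τ ω ≤ (t : ℝ≥0∞)} =
        {ω | τ ω ≤ (t : ℝ≥0∞)} \ (A ∩ {ω | τ ω ≤ (t : ℝ≥0∞)}) := by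
      ext ω; by_cases h : ω ∈ A <;> simp [h]
    rw [h]
    exact (hτ t).diff (hA t)
  measurableSet_iUnion := fun s hs t => by
    rw [Set.iUnion_inter]
    exact MeasurableSet.iUnion fun n => hs n t

/-- The σ-algebra `F_{τ-}`, generated by `F_0` together with all sets
`A ∩ {s < τ}` where `s : ℝ≥0` and `A ∈ F_s`. -/
def sigmaPre (F : Filtration ℝ≥0 m) (τ : Ω → ℝ≥0∞) : MeasurableSpace Ω :=
  (F 0 : MeasurableSpace Ω) ⊔ MeasurableSpace.generateFrom
    {B | ∃ (s : ℝ≥0) (A : Set Ω), MeasurableSet[F s] A ∧ B = A ∩ {ω | (s : ℝ≥0∞) < τ ω}}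

/-- Evaluation of a process at an extended stopping time (junk value at `∞`). -/
def ev (X : ℝ≥0 → Ω → ℝ) (τ : Ω → ℝ≥0∞) (ω : Ω) : ℝ := X (τ ω).toNNReal ω

/-- The underlying financial model, together with the standing assumptions:
nonnegative adapted assets `S i` vanishing from the default time `ζ` onwards, with
strictly positive a.s.-constant initial values `S0 i`; a nonnegative stochastic discount
factor `Y` with `Y_0 = 1` a.s.; and a sequence `ζn` of stopping times nicely approximating
the default time such that every stopped process `(Y_{ζn ∧ t} S^i_{ζn ∧ t})_t` is a
`P`-a.s. càdlàg martingale.  The probability `P` lives on `F_∞ = ⨆ t, F t`. -/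
structure Model (ι : Type*) {Ω : Type*} {m : MeasurableSpace Ω}
    (F : Filtration ℝ≥0 m) (P : Measure Ω) where
  S : ι → ℝ≥0 → Ω → ℝ
  Y : ℝ≥0 → Ω → ℝ
  S0 : ι → ℝ
  ζ : Ω → ℝ≥0∞
  ζn : ℕ → Ω → ℝ≥0
  nonempty : Nonempty ι
  hFinf : (⨆ t : ℝ≥0, (F t : MeasurableSpace Ω)) = m
  hP : IsProbabilityMeasure P
  hζ : IsExtStoppingTime F ζ
  S_nonneg : ∀ i t ω, 0 ≤ S i t ω
  S_adapted : ∀ i, Adapted F (S i)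
  S_default : ∀ i (t : ℝ≥0) ω, ζ ω ≤ (t : ℝ≥0∞) → S i t ω = 0
  S0_pos : ∀ i, 0 < S0 i
  S0_eq : ∀ i, ∀ᵐ ω ∂P, S i 0 ω = S0 i
  Y_nonneg : ∀ t ω, 0 ≤ Y t ω
  Y0 : ∀ᵐ ω ∂P, Y 0 ω = 1
  ζn_stop : ∀ n, IsStoppingTime F (fun ω => ((ζn n ω : ℝ≥0) : WithTop ℝ≥0))
  ζn_mono : ∀ ω, Monotone fun n => ζn n ω
  ζn_le : ∀ (n : ℕ) ω, ζn n ω ≤ (n : ℝ≥0)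
  ζn_tendsto : ∀ ω, Tendsto (fun n => (ζn n ω : ℝ≥0∞)) atTop (nhds (ζ ω))
  mart : ∀ (n : ℕ) (i : ι),
    Martingale (fun t ω => Y (min (ζn n ω) t) ω * S i (min (ζn n ω) t) ω) F P
  cadlag : ∀ (n : ℕ) (i : ι), ∀ᵐ ω ∂P,
    (∀ t : ℝ≥0, ContinuousWithinAt
      (fun s => Y (min (ζn n ω) s) ω * S i (min (ζn n ω) s) ω) (Set.Ici t) t) ∧
    (∀ t : ℝ≥0, 0 < t → ∃ l : ℝ, Tendsto
      (fun s => Y (min (ζn n ω) s) ω * S i (min (ζn n ω) s) ω)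
      (nhdsWithin t (Set.Iio t)) (nhds l))

variable {ι : Type*} {F : Filtration ℝ≥0 m} {P : Measure Ω}

/-- `Q` satisfies the valuation identity for asset `i`:  `Q` is a probability and, for every
extended stopping time `T` and nonnegative `F_T`-measurable `ξ`,
`E_P[Y_T S^i_T ξ ; T < ζ] = S^i_0 E_Q[ξ ; T < ζ]`. -/
def Model.ValId (M : Model ι F P) (i : ι) (Q : Measure Ω) : Prop :=
  IsProbabilityMeasure Q ∧
  ∀ (T : Ω → ℝ≥0∞) (hT : IsExtStoppingTime F T) (ξ : Ω → ℝ≥0∞),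
    Measurable[hT.measurableSpace] ξ →
    ∫⁻ ω in {ω | T ω < M.ζ ω}, ENNReal.ofReal (ev M.Y T ω * ev (M.S i) T ω) * ξ ω ∂P
      = ENNReal.ofReal (M.S0 i) * ∫⁻ ω in {ω | T ω < M.ζ ω}, ξ ω ∂Q

/-- The asset-price ratio process `R^{ij} = (S^i / S^j) 1_{S^j > 0}`. -/
def Model.R (M : Model ι F P) (i j : ι) (t : ℝ≥0) (ω : Ω) : ℝ :=
  if 0 < M.S j t ω then M.S i t ω / M.S j t ω else 0

/-- `ρ^{ij} = liminf_n R^{ij}_{ζ_n}` (computed in `ℝ≥0∞`). -/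
def Model.rho (M : Model ι F P) (i j : ι) (ω : Ω) : ℝ≥0∞ :=
  Filter.liminf (fun n => ENNReal.ofReal (M.R i j (M.ζn n ω) ω)) atTop

/-- The value `EX^{ij}(T) = E_P[Y_T (S^j_T − S^i_T)_+ ; T < ζ]` of the European option to
exchange asset `i` for asset `j` at time `T`. -/
def Model.EX (M : Model ι F P) (i j : ι) (T : Ω → ℝ≥0∞) : ℝ≥0∞ :=
  ∫⁻ ω in {ω | T ω < M.ζ ω},
    ENNReal.ofReal (ev M.Y T ω * max (ev (M.S j) T ω - ev (M.S i) T ω) 0) ∂P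

/-- The value `AX^{ij}(T) = sup_{τ ≤ T} EX^{ij}(τ)` of the American option to exchange
asset `i` for asset `j` up to time `T`; the supremum is over stopping times `τ ≤ T`. -/
def Model.AX (M : Model ι F P) (i j : ι) (T : Ω → ℝ≥0∞) : ℝ≥0∞ :=
  ⨆ (τ : Ω → ℝ≥0∞) (_ : IsExtStoppingTime F τ) (_ : ∀ ω, τ ω ≤ T ω), M.EX i j τ

end ExchangeOptions

theorem NNReal.tendsto_nat_ceil_mul_div_nhdsGE (x : ℝ≥0) :
    Tendsto (fun p : ℕ => (⌈x * p⌉₊ : ℝ≥0) / p) atTop (nhdsWithin x (Ici x)) := by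
  refine tendsto_nhdsWithin_iff.2 ⟨?_, eventually_atTop.2 ⟨1, fun p hp => ?_⟩⟩
  · rw [← NNReal.tendsto_coe]
    refine ((tendsto_nat_ceil_mul_div_atTop x.2).comp tendsto_natCast_atTop_atTop).congr
      fun p => ?_
    rw [Function.comp_apply, ← Nat.map_ceil NNReal.toRealHom fun _ _ h => h]
    simp
  · rw [mem_Ici, le_div_iff₀ (by exact_mod_cast hp)]
    exact Nat.le_ceil _

theorem aemeasurable_comp_of_ae_continuousWithinAt_Ici {α β : Type*} [MeasurableSpace α]
    {μ : Measure α} [TopologicalSpace β] [TopologicalSpace.PseudoMetrizableSpace β]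
    [MeasurableSpace β] [BorelSpace β] {u : ℝ≥0 → α → β} (hu : ∀ t, Measurable (u t))
    (hrc : ∀ᵐ ω ∂μ, ∀ t, ContinuousWithinAt (fun s => u s ω) (Ici t) t)
    {τ : α → ℝ≥0} (hτ : Measurable τ) :
    AEMeasurable (fun ω => u (τ ω) ω) μ := by
  have happrox (p : ℕ) : Measurable fun ω => u ((⌈τ ω * p⌉₊ : ℝ≥0) / p) ω := by
    have hu' : Measurable fun q : ℕ × α => u ((q.1 : ℝ≥0) / p) q.2 :=
      measurable_from_prod_countable_right fun n => hu ((n : ℝ≥0) / p)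
    have hceil : Measurable fun ω => ⌈τ ω * p⌉₊ := (hτ.mul_const (p : ℝ≥0)).nat_ceil
    exact hu'.comp (f := fun ω => (⌈τ ω * p⌉₊, ω)) (hceil.prodMk measurable_id)
  refine aemeasurable_of_tendsto_metrizable_ae atTop (fun p => (happrox p).aemeasurable) ?_
  filter_upwards [hrc] with ω hω
  exact (hω (τ ω)).tendsto.comp (NNReal.tendsto_nat_ceil_mul_div_nhdsGE (τ ω))

theorem lintegral_ofReal_sub_add_lintegral_ofReal {α : Type*} [MeasurableSpace α]
    {μ : Measure α} {f g : α → ℝ} (hf : AEMeasurable f μ) (hf_nonneg : ∀ x, 0 ≤ f x) :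
    ∫⁻ x, ENNReal.ofReal (g x - f x) ∂μ + ∫⁻ x, ENNReal.ofReal (f x) ∂μ
      = ∫⁻ x, max (ENNReal.ofReal (f x)) (ENNReal.ofReal (g x)) ∂μ := by
  rw [← lintegral_add_right' _ hf.ennreal_ofReal]
  refine lintegral_congr fun x => ?_
  rw [ENNReal.ofReal_sub _ (hf_nonneg x), tsub_add_eq_max, max_comm]

namespace ExchangeOptions

variable {Ω ι : Type*} {m : MeasurableSpace Ω} {F : Filtration ℝ≥0 m} {P : Measure Ω}

theorem IsExtStoppingTime.measurable {τ : Ω → ℝ≥0∞} (hτ : IsExtStoppingTime F τ) :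
    Measurable τ := by
  refine measurable_of_Iic fun a => ?_
  rcases eq_or_ne a ∞ with rfl | ha
  · simp
  · lift a to ℝ≥0 using ha
    exact F.le a _ (hτ a)

namespace Model

variable (M : Model ι F P)

def deflatedPrice (k : ι) (T : Ω → ℝ≥0∞) (ω : Ω) : ℝ := ev M.Y T ω * ev (M.S k) T ω

def stoppedDeflatedPrice (n : ℕ) (k : ι) (t : ℝ≥0) (ω : Ω) : ℝ :=
  M.Y (min (M.ζn n ω) t) ω * M.S k (min (M.ζn n ω) t) ω

theorem deflatedPrice_nonneg (k : ι) (T : Ω → ℝ≥0∞) (ω : Ω) : 0 ≤ M.deflatedPrice k T ω :=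
  mul_nonneg (M.Y_nonneg _ _) (M.S_nonneg _ _ _)

theorem eventually_stoppedDeflatedPrice_eq (k : ι) {T : Ω → ℝ≥0∞} {ω : Ω}
    (hω : T ω < M.ζ ω) :
    (fun n => M.stoppedDeflatedPrice n k (T ω).toNNReal ω) =ᶠ[atTop]
      fun _ => M.deflatedPrice k T ω := by
  filter_upwards [(M.ζn_tendsto ω).eventually_mem (Ioi_mem_nhds hω)] with n hn
  have hle : (T ω).toNNReal ≤ M.ζn n ω := by
    rw [← ENNReal.coe_le_coe, ENNReal.coe_toNNReal (hω.trans_le le_top).ne]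
    exact hn.le
  simp only [stoppedDeflatedPrice, min_eq_right hle]
  rfl

theorem aemeasurable_deflatedPrice (k : ι) {T : Ω → ℝ≥0∞} (hT : Measurable T) :
    AEMeasurable (M.deflatedPrice k T) (P.restrict {ω | T ω < M.ζ ω}) := by
  have hD : MeasurableSet {ω | T ω < M.ζ ω} := measurableSet_lt hT M.hζ.measurable
  have hstopped (n : ℕ) :
      AEMeasurable (fun ω => M.stoppedDeflatedPrice n k (T ω).toNNReal ω) P :=
    aemeasurable_comp_of_ae_continuousWithinAt_Ici
      (fun t => ((M.mart n k).stronglyAdapted t).measurable.mono (F.le t) le_rfl)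
      ((M.cadlag n k).mono fun _ hω => hω.1) (ENNReal.measurable_toNNReal.comp hT)
  refine aemeasurable_of_tendsto_metrizable_ae atTop (fun n => (hstopped n).restrict) ?_
  refine (ae_restrict_iff' hD).2 (ae_of_all _ fun ω hω => ?_)
  exact tendsto_const_nhds.congr' (M.eventually_stoppedDeflatedPrice_eq k hω).symm

theorem EX_eq_setLIntegral (i j : ι) (T : Ω → ℝ≥0∞) :
    M.EX i j T = ∫⁻ ω in {ω | T ω < M.ζ ω},
      ENNReal.ofReal (M.deflatedPrice j T ω - M.deflatedPrice i T ω) ∂P := by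
  refine lintegral_congr fun ω => ?_
  have hY : 0 ≤ ev M.Y T ω := M.Y_nonneg _ _
  rw [mul_max_of_nonneg _ _ hY, mul_zero, ENNReal.ofReal_max, ENNReal.ofReal_zero,
    max_zero, mul_sub]
  rfl

theorem ValId.setLIntegral_deflatedPrice {M : Model ι F P} {k : ι} {Q : Measure Ω}
    (hQ : M.ValId k Q) {T : Ω → ℝ≥0∞} (hT : IsExtStoppingTime F T) :
    ∫⁻ ω in {ω | T ω < M.ζ ω}, ENNReal.ofReal (M.deflatedPrice k T ω) ∂P
      = ENNReal.ofReal (M.S0 k) * Q {ω | T ω < M.ζ ω} := by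
  simpa [deflatedPrice] using hQ.2 T hT (fun _ => 1) measurable_const

end Model

/-- European put-call parity: for `Q^i, Q^j` satisfying the valuation
identities, for every stopping time `T`,
`EX^{ij}(T) + S^i_0 Q^i[T < ζ] = EX^{ji}(T) + S^j_0 Q^j[T < ζ]`. -/
theorem stmt16 {Ω ι : Type*} {m : MeasurableSpace Ω} {F : Filtration ℝ≥0 m} {P : Measure Ω}
    (M : Model ι F P) (i j : ι) (Qi Qj : Measure Ω)
    (hQi : M.ValId i Qi) (hQj : M.ValId j Qj)
    (T : Ω → ℝ≥0∞) (hT : IsExtStoppingTime F T) :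
    M.EX i j T + ENNReal.ofReal (M.S0 i) * Qi {ω | T ω < M.ζ ω}
      = M.EX j i T + ENNReal.ofReal (M.S0 j) * Qj {ω | T ω < M.ζ ω} := by
  rw [M.EX_eq_setLIntegral, M.EX_eq_setLIntegral, ← hQi.setLIntegral_deflatedPrice hT,
    ← hQj.setLIntegral_deflatedPrice hT,
    lintegral_ofReal_sub_add_lintegral_ofReal (M.aemeasurable_deflatedPrice i hT.measurable)
      (M.deflatedPrice_nonneg i T),
    lintegral_ofReal_sub_add_lintegral_ofReal (M.aemeasurable_deflatedPrice j hT.measurable)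
      (M.deflatedPrice_nonneg j T)]
  simp only [max_comm]

end ExchangeOptions
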